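/- arXiv:2306.05230 — 2 statements merged into one kernel-verified Lean document; each statement's English description precedes it below -/
import Mathlib

section
/- Let k ≥ 2, let Π = {P_1,…,P_k} be a k-partition of [m], and let ψ : I → J be a fold of [m] such that |I| ≥ 2 and there is no l ∈ [k] with I ∪ J ⊆ P_l. Then the folded identity complex is the full simplex on the remaining vertices: (K_Π)_{∇(I,J)} = Δ[[m]∖I], i.e. every subset of [m]∖I is a face of (K_Π)_{∇(I,J)}. -/
/-!
A face of `K_Π` only has to miss a vertex in each of two different parts. The fold never
lands in `I`, so the folded faces lie in `[m] ∖ I`. Conversely, a set `F` disjoint from `I`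
is its own image and misses all of `I`. If `I` meets two parts, `F` is then a face. Otherwise
`I ⊆ P l`, and some `w ∈ J` lies outside `P l`. If `w ∉ F`, then `F` misses `w` and a vertex
of `I`. If `w ∈ F`, replace `w` by a preimage `v ∈ I`. The new set still has image `F`, and
it misses `w` and, because `|I| ≥ 2`, a second vertex of `I ⊆ P l`.
-/

open scoped Classical

/-- `ψ` (already extended to all of `V` by the identity off `I`) is a fold of the
vertex set with disjoint source `I` and target `J`, surjective from `I` onto `J`. -/
def IsFold {V : Type*} (I J : Finset V) (ψ : V → V) : Prop :=
  Disjoint I J ∧ (∀ v ∈ I, ψ v ∈ J) ∧ (∀ v ∉ I, ψ v = v) ∧ ∀ w ∈ J, ∃ v ∈ I, ψ v = w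

/-- The folded complex of `K` under the extended fold map `ψ`: its faces are exactly
the images `ψ(σ)` of faces `σ` of `K`. -/
def foldFaces {V : Type*} [DecidableEq V] (K : Set (Finset V)) (f : V → V) :
    Set (Finset V) :=
  {τ | ∃ σ ∈ K, τ = σ.image f}

/-- The identity complex `K_Π` of a `k`-partition `Π = {P 1, …, P k}` of `[m]`:
`σ ⊆ [m]` is a face if and only if at most `k - 2` of the parts `P i` satisfy
`P i ⊆ σ`. -/
def KPiFaces {m k : ℕ} (P : Fin k → Finset (Fin m)) : Set (Finset (Fin m)) :=
  {σ | (Finset.univ.filter fun i => P i ⊆ σ).card ≤ k - 2}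

open Finset

namespace IsFold

variable {V : Type*} {I J : Finset V} {ψ : V → V}

theorem apply_notMem (hψ : IsFold I J ψ) (v : V) : ψ v ∉ I := by
  by_cases hv : v ∈ I
  · exact disjoint_right.mp hψ.1 (hψ.2.1 v hv)
  · rwa [hψ.2.2.1 v hv]

theorem apply_ne (hψ : IsFold I J ψ) {v : V} (hv : v ∈ I) : ψ v ≠ v :=
  fun h => hψ.apply_notMem v (by rwa [h])

variable [DecidableEq V]

theorem disjoint_image (hψ : IsFold I J ψ) (σ : Finset V) : Disjoint (σ.image ψ) I := by
  simpa [disjoint_left] using fun v _ => hψ.apply_notMem v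

theorem image_eq_self (hψ : IsFold I J ψ) {F : Finset V} (hF : Disjoint F I) :
    F.image ψ = F := by
  rw [image_congr (g := id) fun x hx => hψ.2.2.1 x (disjoint_left.mp hF hx), image_id]

theorem image_insert_erase (hψ : IsFold I J ψ) {F : Finset V} (hF : Disjoint F I) {v : V}
    (hv : ψ v ∈ F) : (insert v (F.erase (ψ v))).image ψ = F := by
  rw [image_insert, hψ.image_eq_self (hF.mono_left (erase_subset _ _)), insert_erase hv]

theorem mem_foldFaces_of_disjoint (hψ : IsFold I J ψ) {K : Set (Finset V)} {F : Finset V}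
    (hFK : F ∈ K) (hF : Disjoint F I) : F ∈ foldFaces K ψ :=
  ⟨F, hFK, (hψ.image_eq_self hF).symm⟩

end IsFold

section KPi

variable {m k : ℕ} {P : Fin k → Finset (Fin m)}

theorem mem_KPiFaces_of_ne {σ : Finset (Fin m)} {i j : Fin k} (hij : i ≠ j)
    (hi : ¬P i ⊆ σ) (hj : ¬P j ⊆ σ) : σ ∈ KPiFaces P :=
  calc #(univ.filter fun l => P l ⊆ σ)
      ≤ #(univ \ {i, j}) := card_le_card fun l hl => by
        simp only [mem_filter, mem_univ, true_and] at hl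
        simp only [mem_sdiff, mem_univ, mem_insert, mem_singleton, true_and]
        rintro (rfl | rfl) <;> contradiction
    _ = k - 2 := by rw [card_univ_sdiff, card_pair hij, Fintype.card_fin]

theorem exists_mem_part (hcov : univ.biUnion P = univ) (x : Fin m) : ∃ l, x ∈ P l := by
  have hx : x ∈ univ.biUnion P := hcov ▸ mem_univ x
  simpa using hx

theorem mem_KPiFaces_of_notMem (hcov : univ.biUnion P = univ) {σ : Finset (Fin m)}
    {x y : Fin m} {l : Fin k} (hx : x ∈ P l) (hy : y ∉ P l) (hxσ : x ∉ σ) (hyσ : y ∉ σ) :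
    σ ∈ KPiFaces P := by
  obtain ⟨j, hj⟩ := exists_mem_part hcov y
  exact mem_KPiFaces_of_ne (i := l) (j := j) (by rintro rfl; exact hy hj)
    (fun h => hxσ (h hx)) (fun h => hyσ (h hj))

theorem mem_foldFaces_KPiFaces_of_subset_part (hcov : univ.biUnion P = univ)
    {I J F : Finset (Fin m)} {ψ : Fin m → Fin m} (hψ : IsFold I J ψ) (hI : 2 ≤ #I)
    {l : Fin k} (hIl : I ⊆ P l) (hJl : ¬J ⊆ P l) (hF : Disjoint F I) :
    F ∈ foldFaces (KPiFaces P) ψ := by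
  obtain ⟨w, hwJ, hwl⟩ := not_subset.mp hJl
  by_cases hwF : w ∈ F
  · obtain ⟨v, hvI, rfl⟩ := hψ.2.2.2 w hwJ
    obtain ⟨u, huI, huv⟩ := exists_mem_ne (by omega : 1 < #I) v
    refine ⟨insert v (F.erase (ψ v)), ?_, (hψ.image_insert_erase hF hwF).symm⟩
    refine mem_KPiFaces_of_notMem hcov (hIl huI) hwl ?_ ?_
    · simp [huv, disjoint_right.mp hF huI]
    · simp [hψ.apply_ne hvI]
  · obtain ⟨a, haI⟩ := card_pos.mp (by omega : 0 < #I)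
    exact hψ.mem_foldFaces_of_disjoint
      (mem_KPiFaces_of_notMem hcov (hIl haI) hwl (disjoint_right.mp hF haI) hwF) hF

end KPi

theorem foldKPi_full_simplex_general {m k : ℕ} (P : Fin k → Finset (Fin m))
    (hcov : Finset.univ.biUnion P = Finset.univ)
    (I J : Finset (Fin m)) (ψ : Fin m → Fin m) (hψ : IsFold I J ψ)
    (hI : 2 ≤ I.card) (hnl : ¬∃ l : Fin k, I ∪ J ⊆ P l)
    (F : Finset (Fin m)) :
    F ∈ foldFaces (KPiFaces P) ψ ↔ F ⊆ Finset.univ \ I := by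
  rw [subset_sdiff, and_iff_right (subset_univ F)]
  constructor
  · rintro ⟨σ, -, rfl⟩
    exact hψ.disjoint_image σ
  · intro hF
    obtain ⟨a, haI⟩ := card_pos.mp (by omega : 0 < #I)
    obtain ⟨l, hal⟩ := exists_mem_part hcov a
    by_cases hIl : I ⊆ P l
    · exact mem_foldFaces_KPiFaces_of_subset_part hcov hψ hI hIl
        (fun hJl => hnl ⟨l, union_subset hIl hJl⟩) hF
    · obtain ⟨b, hbI, hbl⟩ := not_subset.mp hIl
      exact hψ.mem_foldFaces_of_disjoint
        (mem_KPiFaces_of_notMem hcov hal hbl (disjoint_right.mp hF haI)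
          (disjoint_right.mp hF hbI)) hF

/-- If `|I| ≥ 2` and there is no part `P l` with `I ∪ J ⊆ P l`, then the folded
identity complex is the full simplex on the remaining vertices:
`(K_Π)_{∇(I,J)} = Δ[[m]∖I]`, i.e. every subset of `[m]∖I` is a face. -/
theorem foldKPi_full_simplex {m k : ℕ} (hk : 2 ≤ k) (P : Fin k → Finset (Fin m))
    (hne : ∀ i, (P i).Nonempty)
    (hdisj : ∀ i j, i ≠ j → Disjoint (P i) (P j))
    (hcov : Finset.univ.biUnion P = Finset.univ)
    (I J : Finset (Fin m)) (ψ : Fin m → Fin m) (hψ : IsFold I J ψ)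
    (hI : 2 ≤ I.card) (hnl : ¬∃ l : Fin k, I ∪ J ⊆ P l)
    (F : Finset (Fin m)) :
    F ∈ foldFaces (KPiFaces P) ψ ↔ F ⊆ Finset.univ \ I :=
  foldKPi_full_simplex_general P hcov I J ψ hψ hI hnl F
end

section
/- Let k ≥ 2, let Π = {P_1,…,P_k} be a k-partition of [m], let ψ : I → J be a fold of [m] with I = {u} ⊆ P_i and J = {v} ⊆ P_j for some i ≠ j, and let L_ψ denote the complex L_ψ associated to K_Π and ψ. Then the minimal missing faces of L_ψ are exactly [m]∖{u} and [m]∖{v}. -/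
open scoped Classical

/-- `σ` is a minimal missing face of `K`: it is not a face of `K`, but every proper
subset of it is a face of `K`. -/
def MinNonFace {V : Type*} (K : Set (Finset V)) (σ : Finset V) : Prop :=
  σ ∉ K ∧ ∀ τ ⊂ σ, τ ∈ K

/-- The complex `L_ψ = K_{∇(I,J)}⟨Δ[{k_1} ⊔ I_{k_1}], …, Δ[{k_l} ⊔ I_{k_l}]⟩` on `[m]`:
substitution of the full simplices on the blocks `{t} ⊔ ψ⁻¹(t)` (for `t ∈ [m]∖I`)
into the folded complex `K_{∇(I,J)}`. -/
def LpsiFaces {m : ℕ} (K : Set (Finset (Fin m))) (I : Finset (Fin m))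
    (ψ : Fin m → Fin m) : Set (Finset (Fin m)) :=
  {F | ∃ σ : Fin m → Finset (Fin m),
    (∀ t ∉ I, σ t ⊆ insert t (I.filter fun w => ψ w = t)) ∧
    F = (Finset.univ \ I).biUnion σ ∧
    ((Finset.univ \ I).filter fun t => (σ t).Nonempty) ∈ foldFaces K ψ}

/-!
A set `F` is a face of `L_ψ` exactly when `ψ(F)` is a face of the folded complex, and folding
`u` onto `v` across two parts turns `K_Π` into the boundary of the simplex on `[m] ∖ {u}`:
`ψ(τ) = [m] ∖ {u}` forces `τ` to miss at most one vertex, hence to contain all but one part,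
while every proper subset of `[m] ∖ {u}` is the image of a set missing vertices of two different
parts. Since `ψ(F) = [m] ∖ {u}` iff `F ⊇ [m] ∖ {u}` or `F ⊇ [m] ∖ {v}`, the minimal non-faces
of `L_ψ` are these two sets.
-/

open Finset

section Fold

variable {m : ℕ} {K : Set (Finset (Fin m))} {I : Finset (Fin m)} {ψ : Fin m → Fin m}

theorem mem_LpsiFaces_iff (hI : ∀ w, ψ w ∉ I) (hfix : ∀ t ∉ I, ψ t = t)
    (F : Finset (Fin m)) : F ∈ LpsiFaces K I ψ ↔ F.image ψ ∈ foldFaces K ψ := by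
  constructor
  · rintro ⟨σ, hσ, rfl, hsupp⟩
    have hψσ : ∀ t ∉ I, ∀ x ∈ σ t, ψ x = t := by
      intro t ht x hx
      rcases mem_insert.mp (hσ t ht hx) with rfl | hxI
      · exact hfix x ht
      · exact (mem_filter.mp hxI).2
    convert hsupp using 1
    ext t
    simp only [mem_image, mem_biUnion, mem_filter, mem_sdiff, mem_univ, true_and]
    constructor
    · rintro ⟨x, ⟨s, hs, hx⟩, rfl⟩
      rw [hψσ s hs x hx]
      exact ⟨hs, x, hx⟩
    · rintro ⟨ht, x, hx⟩
      exact ⟨x, ⟨t, ht, hx⟩, hψσ t ht x hx⟩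
  · intro hF
    refine ⟨fun t => F.filter (ψ · = t), fun t ht x hx => ?_, ?_, ?_⟩
    · obtain ⟨-, rfl⟩ := mem_filter.mp hx
      by_cases hxI : x ∈ I
      · exact mem_insert_of_mem (mem_filter.mpr ⟨hxI, rfl⟩)
      · rw [hfix x hxI]
        exact mem_insert_self _ _
    · ext x
      simp only [mem_biUnion, mem_filter, mem_sdiff, mem_univ, true_and]
      exact ⟨fun hx => ⟨ψ x, hI x, hx, rfl⟩, fun ⟨_, _, hx, _⟩ => hx⟩
    · convert hF using 1
      ext t
      simp only [mem_image, mem_filter, mem_sdiff, mem_univ, true_and, Finset.Nonempty]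
      constructor
      · rintro ⟨-, x, hx, rfl⟩
        exact ⟨x, hx, rfl⟩
      · rintro ⟨x, hx, rfl⟩
        exact ⟨hI x, x, hx, rfl⟩

end Fold

section Identity

variable {m k : ℕ} {P : Fin k → Finset (Fin m)} {σ : Finset (Fin m)}

theorem mem_KPiFaces_iff (hk : 2 ≤ k) :
    σ ∈ KPiFaces P ↔ ∃ i j, i ≠ j ∧ ¬ P i ⊆ σ ∧ ¬ P j ⊆ σ := by
  have hsplit := card_filter_add_card_filter_not (s := (univ : Finset (Fin k))) (P · ⊆ σ)
  rw [card_univ, Fintype.card_fin] at hsplit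
  change #(univ.filter (P · ⊆ σ)) ≤ k - 2 ↔ _
  rw [show #(univ.filter (P · ⊆ σ)) ≤ k - 2 ↔ 1 < #(univ.filter (¬ P · ⊆ σ)) by omega,
    one_lt_card]
  simp only [mem_filter, mem_univ, true_and]
  exact ⟨fun ⟨i, hi, j, hj, hij⟩ => ⟨i, j, hij, hi, hj⟩,
    fun ⟨i, j, hij, hi, hj⟩ => ⟨i, hi, j, hj, hij⟩⟩

theorem mem_KPiFaces_of_notMem_s14 (hk : 2 ≤ k) {i j : Fin k} {a b : Fin m} (hij : i ≠ j)
    (ha : a ∈ P i) (hb : b ∈ P j) (haσ : a ∉ σ) (hbσ : b ∉ σ) : σ ∈ KPiFaces P :=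
  (mem_KPiFaces_iff hk).mpr ⟨i, j, hij, fun h => haσ (h ha), fun h => hbσ (h hb)⟩

theorem notMem_KPiFaces_of_univ_erase_subset (hk : 2 ≤ k)
    (hdisj : ∀ i j, i ≠ j → Disjoint (P i) (P j)) {w : Fin m} (hσ : univ.erase w ⊆ σ) :
    σ ∉ KPiFaces P := by
  rw [mem_KPiFaces_iff hk]
  rintro ⟨i, j, hij, hi, hj⟩
  obtain ⟨a, ha, haσ⟩ := not_subset.mp hi
  obtain ⟨b, hb, hbσ⟩ := not_subset.mp hj
  have hmissing : ∀ x ∉ σ, x = w := fun x hx => by_contra fun hxw => hx (hσ (by simp [hxw]))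
  rw [hmissing a haσ] at ha
  rw [hmissing b hbσ] at hb
  exact disjoint_left.mp (hdisj i j hij) ha hb

end Identity

section Merge

variable {V : Type*} [DecidableEq V] {u v : V}

theorem image_ite_of_notMem {F : Finset V} (huF : u ∉ F) :
    F.image (fun w => if w = u then v else w) = F := by
  conv_rhs => rw [← image_id (s := F)]
  exact image_congr fun w hw => if_neg (ne_of_mem_of_not_mem hw huF)

theorem mem_image_ite (F : Finset V) (t : V) :
    t ∈ F.image (fun w => if w = u then v else w) ↔ t ≠ u ∧ t ∈ F ∨ t = v ∧ u ∈ F := by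
  simp only [mem_image]
  grind

variable [Fintype V]

theorem image_ite_subset_univ_erase (huv : u ≠ v) (F : Finset V) :
    F.image (fun w => if w = u then v else w) ⊆ univ.erase u := by
  intro t ht
  rcases (mem_image_ite F t).mp ht with ⟨htu, -⟩ | ⟨rfl, -⟩
  · exact mem_erase.mpr ⟨htu, mem_univ t⟩
  · exact mem_erase.mpr ⟨huv.symm, mem_univ t⟩

theorem image_ite_eq_univ_erase_iff (huv : u ≠ v) (F : Finset V) :
    F.image (fun w => if w = u then v else w) = univ.erase u ↔
      univ.erase u ⊆ F ∨ univ.erase v ⊆ F := by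
  simp only [Finset.ext_iff, subset_iff, mem_image_ite, mem_erase, mem_univ, and_true]
  grind

end Merge

theorem minNonFace_iff_of_notMem_iff {V : Type*} {K : Set (Finset V)} {A B : Finset V}
    (hK : ∀ F, F ∉ K ↔ A ⊆ F ∨ B ⊆ F) (hAB : ¬ A ⊆ B) (hBA : ¬ B ⊆ A) (F : Finset V) :
    MinNonFace K F ↔ F = A ∨ F = B := by
  constructor
  · rintro ⟨hF, hmin⟩
    have hmin' : ∀ C, C ∉ K → C ⊆ F → C = F := fun C hC hCF =>
      by_contra fun hne => hC (hmin C (ssubset_of_subset_of_ne hCF hne))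
    rcases (hK F).mp hF with hAF | hBF
    · exact Or.inl (hmin' A ((hK A).mpr (Or.inl subset_rfl)) hAF).symm
    · exact Or.inr (hmin' B ((hK B).mpr (Or.inr subset_rfl)) hBF).symm
  · rintro (rfl | rfl)
    · refine ⟨(hK F).mpr (Or.inl subset_rfl), fun τ hτ => not_not.mp fun hτK => ?_⟩
      rcases (hK τ).mp hτK with h | h
      · exact hτ.not_subset h
      · exact hBA (h.trans hτ.subset)
    · refine ⟨(hK F).mpr (Or.inr subset_rfl), fun τ hτ => not_not.mp fun hτK => ?_⟩
      rcases (hK τ).mp hτK with h | h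
      · exact hAB (h.trans hτ.subset)
      · exact hτ.not_subset h

theorem mem_foldFaces_KPiFaces_iff {m k : ℕ} (hk : 2 ≤ k) {P : Fin k → Finset (Fin m)}
    (hdisj : ∀ i j, i ≠ j → Disjoint (P i) (P j)) (hcov : univ.biUnion P = univ)
    {u v : Fin m} {i j : Fin k} (hij : i ≠ j) (hu : u ∈ P i) (hv : v ∈ P j)
    (T : Finset (Fin m)) :
    T ∈ foldFaces (KPiFaces P) (fun w => if w = u then v else w) ↔ T ⊂ univ.erase u := by
  have huv : u ≠ v := fun h => disjoint_left.mp (hdisj i j hij) hu (h ▸ hv)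
  constructor
  · rintro ⟨τ, hτ, rfl⟩
    refine ssubset_of_subset_of_ne (image_ite_subset_univ_erase huv τ) fun h => ?_
    rcases (image_ite_eq_univ_erase_iff huv τ).mp h with h | h <;>
      exact notMem_KPiFaces_of_univ_erase_subset hk hdisj h hτ
  · intro hT
    have huT : u ∉ T := fun h => (mem_erase.mp (hT.subset h)).1 rfl
    by_cases hvT : v ∉ T
    · exact ⟨T, mem_KPiFaces_of_notMem_s14 hk hij hu hv huT hvT, (image_ite_of_notMem huT).symm⟩
    obtain ⟨x, hx, hxT⟩ := exists_of_ssubset hT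
    have hxu : x ≠ u := (mem_erase.mp hx).1
    obtain ⟨l, -, hxl⟩ := mem_biUnion.mp (hcov ▸ mem_univ x)
    by_cases hli : l = i
    · -- move the vertex `v ∈ T` back to `u`, which lies in the same part as `x`
      refine ⟨insert u (T.erase v), ?_, ?_⟩
      · refine mem_KPiFaces_of_notMem_s14 hk hij.symm hv (hli ▸ hxl) (by simp [huv.symm]) ?_
        simp [hxu, hxT]
      · rw [image_insert, if_pos rfl, image_ite_of_notMem (fun h => huT (mem_of_mem_erase h)),
          insert_erase (not_not.mp hvT)]
    · exact ⟨T, mem_KPiFaces_of_notMem_s14 hk (Ne.symm hli) hu hxl huT hxT,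
        (image_ite_of_notMem huT).symm⟩

theorem Lpsi_KPi_single_across_parts_general {m k : ℕ} (hk : 2 ≤ k)
    (P : Fin k → Finset (Fin m))
    (hdisj : ∀ i j, i ≠ j → Disjoint (P i) (P j))
    (hcov : Finset.univ.biUnion P = Finset.univ)
    (u v : Fin m) (i j : Fin k) (hij : i ≠ j) (hu : u ∈ P i) (hv : v ∈ P j)
    (F : Finset (Fin m)) :
    MinNonFace (LpsiFaces (KPiFaces P) {u} (fun w => if w = u then v else w)) F ↔
      (F = Finset.univ.erase u ∨ F = Finset.univ.erase v) := by
  have huv : u ≠ v := fun h => disjoint_left.mp (hdisj i j hij) hu (h ▸ hv)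
  have hnonface : ∀ G, G ∉ LpsiFaces (KPiFaces P) {u} (fun w => if w = u then v else w) ↔
      univ.erase u ⊆ G ∨ univ.erase v ⊆ G := fun G => by
    rw [mem_LpsiFaces_iff (fun w => by split_ifs with h <;> simp [h, huv.symm])
        (fun t ht => if_neg (notMem_singleton.mp ht)),
      mem_foldFaces_KPiFaces_iff hk hdisj hcov hij hu hv, ssubset_iff_subset_ne,
      and_iff_right (image_ite_subset_univ_erase huv G), not_not, image_ite_eq_univ_erase_iff huv]
  have hvu : ¬ univ.erase u ⊆ univ.erase v := fun h =>
    (mem_erase.mp (h (mem_erase.mpr ⟨huv.symm, mem_univ v⟩))).1 rfl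
  have huv' : ¬ univ.erase v ⊆ univ.erase u := fun h =>
    (mem_erase.mp (h (mem_erase.mpr ⟨huv, mem_univ u⟩))).1 rfl
  exact minNonFace_iff_of_notMem_iff hnonface hvu huv' F

/-- If `I = {u} ⊆ P i` and `J = {v} ⊆ P j` with `i ≠ j`, then the minimal missing
faces of the complex `L_ψ` associated to `K_Π` and `ψ` are exactly `[m]∖{u}` and
`[m]∖{v}`. -/
theorem Lpsi_KPi_single_across_parts {m k : ℕ} (hk : 2 ≤ k)
    (P : Fin k → Finset (Fin m))
    (hne : ∀ i, (P i).Nonempty)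
    (hdisj : ∀ i j, i ≠ j → Disjoint (P i) (P j))
    (hcov : Finset.univ.biUnion P = Finset.univ)
    (u v : Fin m) (i j : Fin k) (hij : i ≠ j) (hu : u ∈ P i) (hv : v ∈ P j)
    (F : Finset (Fin m)) :
    MinNonFace (LpsiFaces (KPiFaces P) {u} (fun w => if w = u then v else w)) F ↔
      (F = Finset.univ.erase u ∨ F = Finset.univ.erase v) :=
  Lpsi_KPi_single_across_parts_general hk P hdisj hcov u v i j hij hu hv F
end
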